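/- If α = n/m is rational and β ∈ ℤ + αℤ, then the triangle map φ is not ergodic with respect to Lebesgue measure on T². -/
import Mathlib


open MeasureTheory Finset

/-- The step function `θ` on the circle: `1` on `[0,1/2)`, `-1` on `[1/2,1)`. -/
noncomputable def triTheta (q : AddCircle (1:ℝ)) : ℝ :=
  if ((AddCircle.equivIco 1 0 q : ℝ)) < 1/2 then 1 else -1

/-- The triangle map `φ(q,p) = (q+p+αθ(q)+β, p+αθ(q)+β)` on the torus. -/
noncomputable def triMap (α β : ℝ) :
    AddCircle (1:ℝ) × AddCircle (1:ℝ) → AddCircle (1:ℝ) × AddCircle (1:ℝ) :=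
  fun x => (x.1 + x.2 + ((α * triTheta x.1 + β : ℝ) : AddCircle (1:ℝ)),
            x.2 + ((α * triTheta x.1 + β : ℝ) : AddCircle (1:ℝ)))


/-- If `α = n/m` is rational and `β ∈ ℤ + αℤ`, the triangle map is not ergodic
with respect to Lebesgue measure on the torus. -/
theorem triMap_not_ergodic (α β : ℝ) (n : ℤ) (m : ℕ) (hm : 0 < m)
    (hα : α = (n : ℝ) / m) (hβ : ∃ z w : ℤ, β = (z : ℝ) + α * (w : ℝ)) :
    ¬ Ergodic (triMap α β)
      (volume : Measure (AddCircle (1:ℝ) × AddCircle (1:ℝ))) := by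
  intro h
  obtain ⟨z, w, hb⟩ := hβ
  set B : Set (AddCircle (1:ℝ)) := Metric.closedBall (0 : AddCircle (1:ℝ)) (1/4) with hB
  set T : Set (AddCircle (1:ℝ)) := (fun p : AddCircle (1:ℝ) => (m : ℤ) • p) ⁻¹' B with hT
  set S : Set (AddCircle (1:ℝ) × AddCircle (1:ℝ)) := Prod.snd ⁻¹' T with hSdef
  have hm' : ((m : ℤ) : ℝ) ≠ 0 := by exact_mod_cast hm.ne'
  -- the key arithmetic fact: m • (α * triTheta q + β) is an integer
  have key : ∀ q : AddCircle (1:ℝ),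
      (((m : ℝ) * (α * triTheta q + β) : ℝ) : AddCircle (1:ℝ)) = 0 := by
    intro q
    have ht : triTheta q = 1 ∨ triTheta q = -1 := by
      unfold triTheta; split <;> simp
    have hma : (m : ℝ) * α = (n : ℝ) := by
      rw [hα]; field_simp
    rw [AddCircle.coe_eq_zero_iff]
    rcases ht with ht | ht
    · refine ⟨n + m * z + n * w, ?_⟩
      have : (m : ℝ) * (α * triTheta q + β) = (n : ℝ) + m * z + n * w := by
        rw [ht, hb]; linear_combination (1 + (w:ℝ)) * hma
      rw [this]; push_cast [zsmul_eq_mul]; ring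
    · refine ⟨-n + m * z + n * w, ?_⟩
      have : (m : ℝ) * (α * triTheta q + β) = -(n : ℝ) + m * z + n * w := by
        rw [ht, hb]; linear_combination ((w:ℝ) - 1) * hma
      rw [this]; push_cast [zsmul_eq_mul]; ring
  -- S is strictly invariant
  have hfix : triMap α β ⁻¹' S = S := by
    ext ⟨q, p⟩
    simp only [hSdef, hT, Set.mem_preimage, triMap]
    have : (m : ℤ) • (p + ((α * triTheta q + β : ℝ) : AddCircle (1:ℝ)))
        = (m : ℤ) • p := by
      rw [smul_add]
      have : (m : ℤ) • ((α * triTheta q + β : ℝ) : AddCircle (1:ℝ))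
          = (((m : ℝ) * (α * triTheta q + β) : ℝ) : AddCircle (1:ℝ)) := by
        rw [← AddCircle.coe_zsmul]
        norm_num [zsmul_eq_mul]
      rw [this, key q, add_zero]
    rw [this]
  -- S is measurable
  have hcont : Continuous (fun p : AddCircle (1:ℝ) => (m : ℤ) • p) := continuous_zsmul _
  have hTmeas : MeasurableSet T :=
    (hcont.measurable) Metric.isClosed_closedBall.measurableSet
  have hSmeas : MeasurableSet S := measurable_snd hTmeas
  -- volume of S is 1/2
  have hBvol : volume B = ENNReal.ofReal (1/2) := by
    rw [hB, AddCircle.volume_closedBall]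
    norm_num
  have hTvol : volume T = ENNReal.ofReal (1/2) := by
    have hmp : MeasurePreserving (fun p : AddCircle (1:ℝ) => (m : ℤ) • p) volume volume :=
      Measure.measurePreserving_zsmul volume (by exact_mod_cast hm.ne')
    rw [hT, hmp.measure_preimage Metric.isClosed_closedBall.measurableSet.nullMeasurableSet, hBvol]
  have hSvol : volume S = ENNReal.ofReal (1/2) := by
    have : S = (Set.univ : Set (AddCircle (1:ℝ))) ×ˢ T := by
      ext ⟨q, p⟩; simp [hSdef]
    rw [this, Measure.volume_eq_prod, Measure.prod_prod, AddCircle.measure_univ, hTvol]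
    norm_num
  -- conclude
  rcases h.ae_empty_or_univ hSmeas hfix with he | hu
  · have : volume S = 0 := by rwa [← ae_eq_empty]
    rw [hSvol] at this
    norm_num [ENNReal.ofReal_eq_zero] at this
  · have : volume S = volume (Set.univ : Set (AddCircle (1:ℝ) × AddCircle (1:ℝ))) :=
      measure_congr hu
    rw [hSvol, ← Set.univ_prod_univ, Measure.volume_eq_prod, Measure.prod_prod,
      AddCircle.measure_univ, ENNReal.ofReal_one, one_mul] at this
    norm_num [ENNReal.ofReal_eq_one] at this
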